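/- arXiv:2009.13892 — 2 statements merged into one kernel-verified Lean document; each statement's English description precedes it below -/
import Mathlib

section
/- For every positive real y and every positive integer n, (n/(n+1)) * (n + 1 + sqrt((n+1)^2 + y^2)) / ((n + 1/2) + sqrt((n - 1/2)^2 + y^2)) < 1. -/
theorem stmt_2 (y : ℝ) (hy : 0 < y) (n : ℕ) (hn : 1 ≤ n) :
    ((n : ℝ) / (n + 1)) * ((n + 1 + Real.sqrt ((n + 1) ^ 2 + y ^ 2)) /
      ((n + 1 / 2) + Real.sqrt ((n - 1 / 2) ^ 2 + y ^ 2))) < 1 := by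
  set N : ℝ := (n : ℝ) with hNdef
  have hN : 1 ≤ N := by simpa [hNdef] using (Nat.one_le_cast.mpr hn : (1:ℝ) ≤ n)
  set a := Real.sqrt ((N + 1) ^ 2 + y ^ 2) with hadef
  set b := Real.sqrt ((N - 1 / 2) ^ 2 + y ^ 2) with hbdef
  have ha0 : 0 ≤ a := Real.sqrt_nonneg _
  have hb0 : 0 ≤ b := Real.sqrt_nonneg _
  have ha2 : a ^ 2 = (N + 1) ^ 2 + y ^ 2 := Real.sq_sqrt (by positivity)
  have hb2 : b ^ 2 = (N - 1 / 2) ^ 2 + y ^ 2 := Real.sq_sqrt (by positivity)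
  have hblt : N - 1 / 2 < b := by
    rw [hbdef]
    rw [show (N - 1/2)^2 + y^2 = (N-1/2)^2 + y^2 from rfl]
    have : N - 1/2 < Real.sqrt ((N - 1/2)^2 + y^2) := by
      rw [Real.lt_sqrt (by linarith)]
      nlinarith
    exact this
  have key : N * (N + 1 + a) < (N + 1) * (N + 1 / 2 + b) := by
    have h1 : N * a < (N + 1) * b + (N + 1) / 2 := by
      have hrhs : 0 ≤ (N + 1) * b + (N + 1) / 2 := by positivity
      have hsq : (N * a) ^ 2 < ((N + 1) * b + (N + 1) / 2) ^ 2 := by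
        nlinarith [sq_nonneg y, sq_nonneg b, sq_nonneg (N+1)]
      nlinarith [mul_nonneg (Nat.cast_nonneg n : (0:ℝ) ≤ N) ha0]
    nlinarith
  have hden : 0 < (N + 1) * (N + 1 / 2 + b) := by nlinarith
  rw [div_mul_div_comm, div_lt_one hden]
  exact key
end

section
/- Let 0 < R < r₀, α > 0, φ_n = α(1 + |n|/(αR))(R/r₀)^{|n|}, and let N be a positive integer. Then for every integer n with 0 ≤ n ≤ N, Σ_{l∈ℤ, l≠0} φ_{lN+n} < α · 2(1 − R/r₀)^{−2} · (1 + 2N/(αR)) · (R/r₀)^{N−n}. -/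
/-! With `q = R / r₀ < 1` and `|l| = j + 1`, the index `m = l N + n` satisfies
`(N - n) + N j ≤ |m| ≤ 2 N (j + 1)`, hence `φ m ≤ (j + 1) A (q ^ N) ^ j` with
`A = α (1 + 2N / (αR)) q ^ (N - n)`. Summing `(j + 1) x ^ j = 1 / (1 - x) ^ 2` over both signs of `l`
gives the bound `2 A / (1 - q ^ N) ^ 2 ≤ 2 A / (1 - q) ^ 2`. It is strict because the term `l = -1`,
where `|m| = N - n < 2 N`, is strictly below its bound. -/

theorem hasSum_natAbs_mul_pow_natAbs_sub_one {𝕜 : Type*} [NormedField 𝕜] [CompleteSpace 𝕜]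
    {x : 𝕜} (hx : ‖x‖ < 1) :
    HasSum (fun l : {l : ℤ // l ≠ 0} ↦ ((l : ℤ).natAbs : 𝕜) * x ^ ((l : ℤ).natAbs - 1))
      (2 / (1 - x) ^ 2) := by
  set f : ℤ → 𝕜 := fun l ↦ (l.natAbs : 𝕜) * x ^ (l.natAbs - 1)
  have hhalf : HasSum (fun j : ℕ ↦ ((j : 𝕜) + 1) * x ^ j) (1 / (1 - x) ^ 2) := by
    simpa [Ring.inverse_eq_inv'] using hasSum_choose_mul_geometric_of_norm_lt_one' 1 hx
  have hpos : (fun j : ℕ ↦ f (j + 1)) = fun j : ℕ ↦ ((j : 𝕜) + 1) * x ^ j := by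
    ext j; norm_cast
  have hneg : (fun j : ℕ ↦ f (-(j + 1))) = fun j : ℕ ↦ ((j : 𝕜) + 1) * x ^ j := by
    ext j; simp only [f, Int.natAbs_neg]; norm_cast
  have hf : HasSum f (1 / (1 - x) ^ 2 + f 0 + 1 / (1 - x) ^ 2) :=
    HasSum.of_add_one_of_neg_add_one (hpos ▸ hhalf) (hneg ▸ hhalf)
  have hsupp : Function.support f ⊆ {l | l ≠ 0} := fun l hl h0 ↦ hl (by simp [f, h0])
  exact (hasSum_subtype_iff_of_support_subset hsupp).2 (by convert hf using 1; simp [f]; ring)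

theorem natAbs_mul_add_mem_Icc {l : ℤ} {N n j : ℕ} (hn : n ≤ N) (hl : l.natAbs = j + 1) :
    (l * N + n).natAbs ∈ Set.Icc (N - n + N * j) (2 * N * (j + 1)) := by
  rcases Int.natAbs_eq l with h | h <;> rw [h, hl] <;> constructor <;> push_cast <;> grind

theorem mul_one_add_div_mul_pow_le {α b q : ℝ} (hα : 0 ≤ α) (hb : 0 < b) (hq0 : 0 ≤ q)
    (hq1 : q ≤ 1) {N k j M : ℕ} (hlow : k + N * j ≤ M) (hup : M ≤ 2 * N * (j + 1)) :
    α * (1 + M / b) * q ^ M ≤ α * (1 + 2 * N / b) * q ^ k * ((j + 1) * (q ^ N) ^ j) := by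
  have hcoef : 1 + (M : ℝ) / b ≤ (j + 1) * (1 + 2 * N / b) := by
    have hM : (M : ℝ) ≤ 2 * N * (j + 1) := by exact_mod_cast hup
    rw [mul_add, mul_one, mul_div_assoc']
    gcongr
    · linarith [(j.cast_nonneg : (0 : ℝ) ≤ j)]
    · linarith
  have hpow : q ^ M ≤ q ^ k * (q ^ N) ^ j := by
    rw [← pow_mul, ← pow_add]
    exact pow_le_pow_of_le_one hq0 hq1 hlow
  calc α * (1 + M / b) * q ^ M ≤ α * ((j + 1) * (1 + 2 * N / b)) * (q ^ k * (q ^ N) ^ j) := by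
        gcongr
    _ = _ := by ring

theorem stmt_16 (R r₀ α : ℝ) (hR : 0 < R) (hRr : R < r₀) (hα : 0 < α)
    (φ : ℤ → ℝ) (hφ : ∀ n : ℤ, φ n = α * (1 + |(n : ℝ)| / (α * R)) * (R / r₀) ^ n.natAbs)
    (N : ℕ) (hN : 0 < N) (n : ℕ) (hn : n ≤ N) :
    ∑' l : {l : ℤ // l ≠ 0}, φ ((l : ℤ) * N + n) <
      α * (2 / (1 - R / r₀) ^ 2) * (1 + 2 * N / (α * R)) * (R / r₀) ^ (N - n) := by
  set q := R / r₀
  have hq0 : 0 < q := div_pos hR (hR.trans hRr)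
  have hq1 : q < 1 := (div_lt_one (hR.trans hRr)).2 hRr
  have hφ' (m : ℤ) : φ m = α * (1 + (m.natAbs : ℝ) / (α * R)) * q ^ m.natAbs := by
    rw [hφ, Nat.cast_natAbs, Int.cast_abs]
  set A := α * (1 + 2 * N / (α * R)) * q ^ (N - n)
  set g : {l : ℤ // l ≠ 0} → ℝ := fun l ↦ A * ((l : ℤ).natAbs * (q ^ N) ^ ((l : ℤ).natAbs - 1))
  have hg : HasSum g (A * (2 / (1 - q ^ N) ^ 2)) :=
    (hasSum_natAbs_mul_pow_natAbs_sub_one (by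
      rw [norm_pow, Real.norm_of_nonneg hq0.le]; exact pow_lt_one₀ hq0.le hq1 hN.ne')).mul_left A
  have hle : ∀ l : {l : ℤ // l ≠ 0}, φ ((l : ℤ) * N + n) ≤ g l := by
    rintro ⟨l, hl⟩
    obtain ⟨j, hj⟩ : ∃ j, l.natAbs = j + 1 := Nat.exists_eq_add_one.2 (Int.natAbs_pos.2 hl)
    obtain ⟨hlow, hup⟩ := natAbs_mul_add_mem_Icc hn hj
    rw [hφ']
    convert mul_one_add_div_mul_pow_le hα.le (mul_pos hα hR) hq0.le hq1.le hlow hup using 1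
    simp only [g, hj, Nat.cast_succ, add_tsub_cancel_right]; rfl
  have hlt : φ ((-1 : ℤ) * N + n) < g ⟨-1, by norm_num⟩ := by
    have habs : ((-1 : ℤ) * N + n).natAbs = N - n := by omega
    have hcoef : ((N - n : ℕ) : ℝ) < 2 * N := by exact_mod_cast (by omega : N - n < 2 * N)
    rw [hφ', habs]
    simp only [g, A, Int.natAbs_neg, Int.natAbs_one, Nat.cast_one, tsub_self, pow_zero, mul_one]
    gcongr
  have hsum : Summable fun l : {l : ℤ // l ≠ 0} ↦ φ ((l : ℤ) * N + n) :=
    hg.summable.of_nonneg_of_le (fun l ↦ by rw [hφ']; positivity) hle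
  have hqN : q ^ N ≤ q := pow_le_of_le_one hq0.le hq1.le hN.ne'
  calc _ < A * (2 / (1 - q ^ N) ^ 2) := hasSum_lt (i := ⟨-1, by norm_num⟩) hle hlt hsum.hasSum hg
    _ ≤ A * (2 / (1 - q) ^ 2) := by gcongr
    _ = _ := by ring
end
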